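/- For every β > 0, the equation (a+b)·x + c + d = T_β(x) has exactly one solution x* in (0, 1), and this solution satisfies x* ∈ (0, 1/2). Equivalently, the logit system has a unique prosperity fixed point (x*, 1), and x* < 1/2. -/

import Mathlib

/-!
The payoff identities make the affine side `(a + b) x + c + d = δPS1 (x - 1) - δTR1 x` negative
on `(0, 1)`, while `T_β` is nonnegative on `[1/2, 1)`; so every solution lies in `(0, 1/2)`.
There `T_β` is strictly concave (its derivative is `1 / (β x (1 - x))`), hence so is the difference
`f` of the two sides. Since `f → -∞` at `0` and `f (1/2) > 0`, the intermediate value theorem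
gives a zero, and strict concavity forbids a second zero to the left of a point where `f > 0`.
-/

set_option autoImplicit false

open Real Set Filter Topology

noncomputable def logit (x : ℝ) : ℝ := log (x / (1 - x))

lemma logit_half : logit (1 / 2) = 0 := by norm_num [logit]

lemma logit_nonneg {x : ℝ} (hx : 1 / 2 ≤ x) (hx1 : x < 1) : 0 ≤ logit x :=
  log_nonneg <| (one_le_div (by linarith)).2 (by linarith)

lemma hasDerivAt_logit {x : ℝ} (hx : x ∈ Ioo (0 : ℝ) 1) :
    HasDerivAt logit (x * (1 - x))⁻¹ x := by
  obtain ⟨hx0, hx1⟩ := hx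
  have hsub : 1 - x ≠ 0 := by linarith
  have hdiv : HasDerivAt (fun y => y / (1 - y)) ((1 * (1 - x) - x * -1) / (1 - x) ^ 2) x :=
    (hasDerivAt_id' x).div ((hasDerivAt_id' x).const_sub 1) hsub
  exact (hdiv.log (div_ne_zero hx0.ne' hsub)).congr_deriv (by field_simp; ring)

lemma continuousOn_logit : ContinuousOn logit (Ioo 0 1) :=
  fun _ hx => (hasDerivAt_logit hx).continuousAt.continuousWithinAt

lemma tendsto_logit_nhdsGT_zero : Tendsto logit (𝓝[>] 0) atBot := by
  refine tendsto_log_nhdsGT_zero.comp (tendsto_nhdsWithin_iff.2 ⟨?_, ?_⟩)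
  · have : Tendsto (fun x : ℝ => x / (1 - x)) (𝓝 0) (𝓝 (0 / (1 - 0))) :=
      tendsto_id.div (tendsto_const_nhds.sub tendsto_id) (by norm_num)
    simpa using this.mono_left nhdsWithin_le_nhds
  · filter_upwards [Ioo_mem_nhdsGT (zero_lt_one' ℝ)] with x hx
    exact div_pos hx.1 (sub_pos.2 hx.2)

lemma strictConcaveOn_logit_sub_affine (m q : ℝ) :
    StrictConcaveOn ℝ (Ioc 0 (1 / 2)) fun x => logit x - (m * x + q) := by
  have hderiv : ∀ x ∈ Ioo (0 : ℝ) 1,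
      HasDerivAt (fun x => logit x - (m * x + q)) ((x * (1 - x))⁻¹ - m) x := fun x hx =>
    ((hasDerivAt_logit hx).sub (((hasDerivAt_id' x).const_mul m).add_const q)).congr_deriv
      (by ring)
  refine StrictAntiOn.strictConcaveOn_of_deriv (convex_Ioc _ _)
    ((continuousOn_logit.sub (by fun_prop)).mono (Ioc_subset_Ioo_right (by norm_num))) ?_
  rw [interior_Ioc]
  intro u hu v hv huv
  rw [(hderiv u ⟨hu.1, by linarith [hu.2]⟩).deriv, (hderiv v ⟨hv.1, by linarith [hv.2]⟩).deriv]
  have : u * (1 - u) < v * (1 - v) := by nlinarith [hu.1, hv.2]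
  gcongr
  nlinarith [hu.1, hu.2]

theorem StrictConcaveOn.injOn_setOf_lt_le {s : Set ℝ} {f : ℝ → ℝ} (hf : StrictConcaveOn ℝ s f)
    {w : ℝ} (hw : w ∈ s) : InjOn f {x ∈ s | x < w ∧ f x ≤ f w} := by
  suffices ∀ u ∈ {x ∈ s | x < w ∧ f x ≤ f w}, ∀ v ∈ s, u < v → v < w → f u < f v by
    intro u hu v hv huv
    by_contra hne
    rcases lt_or_gt_of_ne hne with h | h
    · exact (this u hu v hv.1 h hv.2.1).ne huv
    · exact (this v hv u hu.1 h hu.2.1).ne' huv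
  rintro u ⟨hu, huw, hfu⟩ v hv huv hvw
  have := hf.lt_on_openSegment hu hw huw.ne (by rw [openSegment_eq_Ioo huw]; exact ⟨huv, hvw⟩)
  rwa [min_eq_left hfu] at this

theorem existsUnique_logit_eq_affine {m q : ℝ} (hneg : ∀ x ∈ Ico (1 / 2 : ℝ) 1, m * x + q < 0) :
    (∃! x, x ∈ Ioo (0 : ℝ) 1 ∧ logit x = m * x + q) ∧
      ∀ x ∈ Ioo (0 : ℝ) 1, logit x = m * x + q → x < 1 / 2 := by
  set f : ℝ → ℝ := fun x => logit x - (m * x + q)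
  have hf_concave : StrictConcaveOn ℝ (Ioc 0 (1 / 2)) f := strictConcaveOn_logit_sub_affine m q
  have hf_half : 0 < f (1 / 2) := by
    simp only [f, logit_half]
    linarith [hneg (1 / 2) ⟨le_rfl, by norm_num⟩]
  have below_half : ∀ x ∈ Ioo (0 : ℝ) 1, logit x = m * x + q → x < 1 / 2 := by
    intro x hx hsol
    by_contra! hx2
    linarith [logit_nonneg hx2 hx.2, hneg x ⟨hx2, hx.2⟩]
  obtain ⟨p, hfp, hp⟩ : ∃ p, f p < 0 ∧ p ∈ Ioo (0 : ℝ) (1 / 2) := by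
    have hlin : Tendsto (fun x => -(m * x + q)) (𝓝[>] 0) (𝓝 (-(m * 0 + q))) :=
      (Continuous.tendsto (by fun_prop) 0).mono_left nhdsWithin_le_nhds
    have hf_bot : Tendsto f (𝓝[>] 0) atBot := by
      simpa only [f, ← sub_eq_add_neg] using tendsto_logit_nhdsGT_zero.atBot_add hlin
    exact ((hf_bot.eventually (eventually_lt_atBot 0)).and
      (Ioo_mem_nhdsGT (by norm_num : (0 : ℝ) < 1 / 2))).exists
  have hf_cont : ContinuousOn f (Icc p (1 / 2)) :=
    (continuousOn_logit.sub (by fun_prop)).mono (Icc_subset_Ioo hp.1 (by norm_num))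
  obtain ⟨x₀, hx₀, hfx₀⟩ := intermediate_value_Ioo hp.2.le hf_cont ⟨hfp, hf_half⟩
  have hzero : ∀ x, logit x = m * x + q ↔ f x = 0 := fun _ => sub_eq_zero.symm
  have hmem : ∀ x ∈ Ioo (0 : ℝ) (1 / 2), f x = 0 →
      x ∈ {x ∈ Ioc 0 (1 / 2) | x < 1 / 2 ∧ f x ≤ f (1 / 2)} :=
    fun x hx hfx => ⟨⟨hx.1, hx.2.le⟩, hx.2, hfx ▸ hf_half.le⟩
  have hx₀01 : x₀ ∈ Ioo (0 : ℝ) 1 := ⟨hp.1.trans hx₀.1, hx₀.2.trans (by norm_num)⟩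
  refine ⟨⟨x₀, ⟨hx₀01, (hzero x₀).2 hfx₀⟩, fun y ⟨hy, hsol⟩ => ?_⟩, below_half⟩
  have hfy : f y = 0 := (hzero y).1 hsol
  exact hf_concave.injOn_setOf_lt_le ⟨by norm_num, le_rfl⟩
    (hmem y ⟨hy.1, below_half y hy hsol⟩ hfy) (hmem x₀ ⟨hx₀01.1, hx₀.2⟩ hfx₀) (hfy.trans hfx₀.symm)

theorem prosperity_fixed_point_general
    (δTR1 δPS1 δRT0 δSP0 : ℝ)
    (hTR1 : 0 < δTR1) (hPS1 : 0 < δPS1)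
    (a b c d : ℝ)
    (ha : a = δSP0 - δRT0 + δPS1 - δTR1) (hb : b = δRT0 - δSP0)
    (hc : c = -(δPS1 + δSP0)) (hd : d = δSP0)
    (T : ℝ → ℝ → ℝ) (hT : ∀ β x, T β x = β⁻¹ * Real.log (x / (1 - x))) :
    ∀ β : ℝ, 0 < β →
      (∃! x : ℝ, x ∈ Ioo (0:ℝ) 1 ∧ (a + b) * x + c + d = T β x) ∧
      (∀ x ∈ Ioo (0:ℝ) 1, (a + b) * x + c + d = T β x → x ∈ Ioo (0:ℝ) (1/2)) := by
  intro β hβ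
  have hneg : ∀ x ∈ Ico (1 / 2 : ℝ) 1, β * (a + b) * x + β * (c + d) < 0 := by
    intro x ⟨hx, hx1⟩
    have : (a + b) * x + c + d < 0 := by subst ha hb hc hd; nlinarith
    nlinarith
  have hiff : ∀ x, (a + b) * x + c + d = T β x ↔ logit x = β * (a + b) * x + β * (c + d) := by
    intro x
    rw [hT, ← logit, eq_inv_mul_iff_mul_eq₀ hβ.ne']
    constructor <;> intro h <;> linear_combination -h
  obtain ⟨hunique, hbelow⟩ := existsUnique_logit_eq_affine hneg
  simp_rw [hiff]
  exact ⟨hunique, fun x hx hsol => ⟨hx.1, hbelow x hx hsol⟩⟩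

/-- For every β > 0, the equation (a+b)·x + c + d = T_β(x) has
exactly one solution x* in (0,1), and it satisfies x* ∈ (0, 1/2); i.e. the
logit system has a unique prosperity fixed point (x*, 1), with x* < 1/2. -/
theorem prosperity_fixed_point
    (δTR1 δPS1 δRT0 δSP0 : ℝ)
    (hTR1 : 0 < δTR1) (hPS1 : 0 < δPS1) (hSP0 : δSP0 < 0) (hRT0 : -δSP0 < δRT0)
    (a b c d : ℝ)
    (ha : a = δSP0 - δRT0 + δPS1 - δTR1) (hb : b = δRT0 - δSP0)
    (hc : c = -(δPS1 + δSP0)) (hd : d = δSP0)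
    (T : ℝ → ℝ → ℝ) (hT : ∀ β x, T β x = β⁻¹ * Real.log (x / (1 - x))) :
    ∀ β : ℝ, 0 < β →
      (∃! x : ℝ, x ∈ Ioo (0:ℝ) 1 ∧ (a + b) * x + c + d = T β x) ∧
      (∀ x ∈ Ioo (0:ℝ) 1, (a + b) * x + c + d = T β x → x ∈ Ioo (0:ℝ) (1/2)) :=
  prosperity_fixed_point_general δTR1 δPS1 δRT0 δSP0 hTR1 hPS1 a b c d ha hb hc hd T hT
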